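/- arXiv:2308.01382 — 3 statements merged into one kernel-verified Lean document; each statement's English description precedes it below -/
import Mathlib

section
/- For finite metric spaces (X, d_X) and (Y, d_Y), the scaled spread of the product space (X × Y, d_X ⊕ d_Y), where (d_X ⊕ d_Y)((x1,y1),(x2,y2)) = d_X(x1,x2) + d_Y(y1,y2), equals the product of the scaled spreads: σ_{d_X ⊕ d_Y}(t) = σ_{d_X}(t) · σ_{d_Y}(t) for all t ≥ 0. -/
theorem Fintype.sum_prod_inv_sum_mul {K X Y : Type*} [Field K] [Fintype X] [Fintype Y]
    (f : X → X → K) (g : Y → Y → K) :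
    ∑ p : X × Y, (∑ q : X × Y, f p.1 q.1 * g p.2 q.2)⁻¹ =
      (∑ x, (∑ x', f x x')⁻¹) * ∑ y, (∑ y', g y y')⁻¹ := by
  simp only [Fintype.sum_prod_type, ← Finset.sum_mul_sum, mul_inv]

theorem spread_prod_general (X Y : Type*) [Fintype X] [Fintype Y]
    [MetricSpace X] [MetricSpace Y]
    (σX σY σP : ℝ → ℝ)
    (hσX : ∀ t : ℝ, σX t = ∑ x : X, (∑ y : X, Real.exp (-t * dist x y))⁻¹)
    (hσY : ∀ t : ℝ, σY t = ∑ x : Y, (∑ y : Y, Real.exp (-t * dist x y))⁻¹)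
    (hσP : ∀ t : ℝ, σP t = ∑ p : X × Y, (∑ q : X × Y,
      Real.exp (-t * (dist p.1 q.1 + dist p.2 q.2)))⁻¹)
    (t : ℝ) :
    σP t = σX t * σY t := by
  simp only [hσX, hσY, hσP, mul_add, Real.exp_add]
  exact Fintype.sum_prod_inv_sum_mul (fun x x' : X ↦ Real.exp (-t * dist x x'))
    (fun y y' : Y ↦ Real.exp (-t * dist y y'))

/-- The scaled spread of the ℓ¹-product of two finite metric spaces is the
product of the scaled spreads. -/
theorem spread_prod (X Y : Type*) [Fintype X] [Fintype Y]
    [MetricSpace X] [MetricSpace Y]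
    (σX σY σP : ℝ → ℝ)
    (hσX : ∀ t : ℝ, σX t = ∑ x : X, (∑ y : X, Real.exp (-t * dist x y))⁻¹)
    (hσY : ∀ t : ℝ, σY t = ∑ x : Y, (∑ y : Y, Real.exp (-t * dist x y))⁻¹)
    (hσP : ∀ t : ℝ, σP t = ∑ p : X × Y, (∑ q : X × Y,
      Real.exp (-t * (dist p.1 q.1 + dist p.2 q.2)))⁻¹)
    (t : ℝ) (ht : 0 ≤ t) :
    σP t = σX t * σY t :=
  spread_prod_general X Y σX σY σP hσX hσY hσP t
end

section
/- The scaled spread of the unit interval [0,1] with the usual metric, defined by σ(t) = ∫₀¹ (∫₀¹ e^{-t|x-y|} dy)^{-1} dx, satisfies σ(t) = arctanh(√(1 - e^{-t}))/√(1 - e^{-t}) for t > 0. -/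
/-!
For `x ∈ [0,1]` the inner integral is `(2 - e^{-tx} - e^{-t(1-x)}) / t`. With `v = e^{t(x-1)}` and
`s = √(1 - e^{-t})` one has `v (2 - e^{-tx} - e^{-t(1-x)}) = s² - (v - 1)²`, which makes
`x ↦ arctanh ((v - 1) / s) / s` a primitive of the reciprocal `t / (2 - e^{-tx} - e^{-t(1-x)})`.
This primitive vanishes at `x = 1` and equals `-arctanh s / s` at `x = 0`, since `v(0) - 1 = -s²`.
-/

open Real MeasureTheory

/-- The inverse hyperbolic tangent, `arctanh x = (1/2)·ln((1+x)/(1-x))`. -/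
noncomputable def arctanh (x : ℝ) : ℝ := (1 / 2) * Real.log ((1 + x) / (1 - x))

open intervalIntegral Set

theorem arctanh_zero : arctanh 0 = 0 := by simp [arctanh]

theorem arctanh_neg (w : ℝ) : arctanh (-w) = -arctanh w := by
  rw [arctanh, arctanh, ← sub_eq_add_neg, sub_neg_eq_add, ← inv_div (1 + w), log_inv]
  ring

theorem hasDerivAt_arctanh {w : ℝ} (hw : |w| < 1) : HasDerivAt arctanh (1 - w ^ 2)⁻¹ w := by
  obtain ⟨h₁, h₂⟩ := abs_lt.mp hw
  have hq := ((hasDerivAt_id' w).const_add 1).div ((hasDerivAt_id' w).const_sub 1)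
    (sub_ne_zero.mpr h₂.ne')
  refine ((hq.log (div_pos (by linarith) (by linarith)).ne').const_mul (1 / 2)).congr_deriv ?_
  have : 1 - w ≠ 0 := by linarith
  have : 1 + w ≠ 0 := by linarith
  simp only [Pi.div_apply]
  rw [show 1 - w ^ 2 = (1 - w) * (1 + w) by ring]
  field_simp
  ring

theorem integral_exp_neg_mul {t : ℝ} (ht : t ≠ 0) (c : ℝ) :
    ∫ z in (0 : ℝ)..c, exp (-t * z) = (1 - exp (-t * c)) / t := by
  rw [integral_comp_mul_left exp (neg_ne_zero.mpr ht), integral_exp, mul_zero, exp_zero,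
    smul_eq_mul]
  field_simp
  ring

theorem integral_exp_neg_mul_abs_sub {t a b x : ℝ} (ht : t ≠ 0) (hx : x ∈ Icc a b) :
    ∫ y in a..b, exp (-t * |x - y|) = (2 - exp (-t * (x - a)) - exp (-t * (b - x))) / t := by
  have hint : ∀ c d, IntervalIntegrable (fun y => exp (-t * |x - y|)) volume c d :=
    fun c d => by apply Continuous.intervalIntegrable; fun_prop
  have hleft : ∫ y in a..x, exp (-t * |x - y|) = ∫ z in (0 : ℝ)..x - a, exp (-t * z) := by
    rw [integral_comp_sub_left (fun z => exp (-t * |z|)), sub_self]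
    refine integral_congr fun z hz => ?_
    rw [uIcc_of_le (by linarith [hx.1]), mem_Icc] at hz
    simp only [abs_of_nonneg hz.1]
  have hright : ∫ y in x..b, exp (-t * |x - y|) = ∫ z in (0 : ℝ)..b - x, exp (-t * z) := by
    simp only [abs_sub_comm x]
    rw [integral_comp_sub_right (fun z => exp (-t * |z|)), sub_self]
    refine integral_congr fun z hz => ?_
    rw [uIcc_of_le (by linarith [hx.2]), mem_Icc] at hz
    simp only [abs_of_nonneg hz.1]
  rw [← integral_add_adjacent_intervals (hint a x) (hint x b), hleft, hright,
    integral_exp_neg_mul ht, integral_exp_neg_mul ht]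
  ring

theorem sub_one_div_sqrt_one_sub {y : ℝ} (hy : y < 1) : (y - 1) / √(1 - y) = -√(1 - y) := by
  have hs : 0 < √(1 - y) := sqrt_pos.mpr (by linarith)
  field_simp
  linarith [sq_sqrt (by linarith : 0 ≤ 1 - y)]

section

variable {t x : ℝ}

theorem exp_mul_sub_one_mul_two_sub_exp_sub_exp (t x : ℝ) :
    exp (t * (x - 1)) * (2 - exp (-t * x) - exp (-t * (1 - x)))
      = (1 - exp (-t)) - (exp (t * (x - 1)) - 1) ^ 2 := by
  rw [show -t * x = -t - t * (x - 1) by ring, show -t * (1 - x) = t * (x - 1) by ring, exp_sub]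
  field_simp
  ring

theorem abs_exp_mul_sub_one_sub_one_le (ht : 0 ≤ t) (hx : x ∈ Icc (0 : ℝ) 1) :
    |exp (t * (x - 1)) - 1| ≤ 1 - exp (-t) := by
  have hlo : exp (-t) ≤ exp (t * (x - 1)) := exp_le_exp.mpr (by nlinarith [hx.1])
  have hhi : exp (t * (x - 1)) ≤ 1 := exp_le_one_iff.mpr (by nlinarith [hx.2])
  rw [abs_of_nonpos (by linarith)]
  linarith

theorem two_sub_exp_sub_exp_pos (ht : 0 < t) (hx : x ∈ Icc (0 : ℝ) 1) :
    0 < 2 - exp (-t * x) - exp (-t * (1 - x)) := by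
  have hbound := abs_exp_mul_sub_one_sub_one_le ht.le hx
  have ha : 0 < 1 - exp (-t) := by simpa using exp_lt_one_iff.mpr (neg_lt_zero.mpr ht)
  have hsq : (exp (t * (x - 1)) - 1) ^ 2 < 1 - exp (-t) := by
    rw [← sq_abs]
    nlinarith [abs_nonneg (exp (t * (x - 1)) - 1), exp_pos (-t)]
  refine pos_of_mul_pos_right ?_ (exp_pos (t * (x - 1))).le
  rw [exp_mul_sub_one_mul_two_sub_exp_sub_exp]
  linarith

theorem hasDerivAt_arctanh_exp_mul_sub_one_div_sqrt (ht : 0 < t) (hx : x ∈ Icc (0 : ℝ) 1) :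
    HasDerivAt
      (fun x => arctanh ((exp (t * (x - 1)) - 1) / √(1 - exp (-t))) / √(1 - exp (-t)))
      (t / (2 - exp (-t * x) - exp (-t * (1 - x)))) x := by
  have hmass := exp_mul_sub_one_mul_two_sub_exp_sub_exp t x
  have hD := (two_sub_exp_sub_exp_pos ht hx).ne'
  set s := √(1 - exp (-t))
  set v := exp (t * (x - 1))
  have ha : exp (-t) < 1 := exp_lt_one_iff.mpr (neg_lt_zero.mpr ht)
  have hs2 : s ^ 2 = 1 - exp (-t) := sq_sqrt (by linarith)
  have hs : 0 < s := sqrt_pos.mpr (by linarith)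
  have hs1 : s < 1 := (sqrt_lt' one_pos).mpr (by linarith [exp_pos (-t)])
  have hw : |(v - 1) / s| < 1 := by
    rw [abs_div, abs_of_pos hs, div_lt_one hs]
    nlinarith [abs_exp_mul_sub_one_sub_one_le ht.le hx]
  have hv : HasDerivAt (fun x => exp (t * (x - 1))) (v * t) x := by
    simpa using (((hasDerivAt_id' x).sub_const 1).const_mul t).exp
  refine (((hasDerivAt_arctanh hw).comp x ((hv.sub_const 1).div_const s)).div_const s).congr_deriv
    ?_
  have h1w : 1 - ((v - 1) / s) ^ 2 = v * (2 - exp (-t * x) - exp (-t * (1 - x))) / s ^ 2 := by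
    rw [hmass, ← hs2]
    field_simp
  have hv0 : v ≠ 0 := (exp_pos _).ne'
  rw [h1w]
  field_simp

end

/-- The scaled spread of the unit interval `[0,1]` with the usual metric,
`σ(t) = ∫₀¹ (∫₀¹ e^{-t|x-y|} dy)⁻¹ dx`, equals
`arctanh(√(1-e^{-t}))/√(1-e^{-t})` for `t > 0`. -/
theorem spread_unit_interval (t : ℝ) (ht : 0 < t) :
    (∫ x in (0:ℝ)..1, (∫ y in (0:ℝ)..1, Real.exp (-t * |x - y|))⁻¹)
      = arctanh (Real.sqrt (1 - Real.exp (-t))) / Real.sqrt (1 - Real.exp (-t)) := by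
  have hI : uIcc (0 : ℝ) 1 = Icc 0 1 := uIcc_of_le zero_le_one
  have hint :
      IntervalIntegrable (fun x => t / (2 - exp (-t * x) - exp (-t * (1 - x)))) volume 0 1 :=
    (continuousOn_const.div (by fun_prop) fun x hx =>
      (two_sub_exp_sub_exp_pos ht (hI ▸ hx)).ne').intervalIntegrable
  have hend := sub_one_div_sqrt_one_sub (exp_lt_one_iff.mpr (neg_lt_zero.mpr ht))
  calc _ = ∫ x in (0 : ℝ)..1, t / (2 - exp (-t * x) - exp (-t * (1 - x))) :=
        integral_congr fun x hx => by
          rw [integral_exp_neg_mul_abs_sub ht.ne' (hI ▸ hx), sub_zero, inv_div]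
    _ = _ := integral_eq_sub_of_hasDerivAt
        (fun x hx => hasDerivAt_arctanh_exp_mul_sub_one_div_sqrt ht (hI ▸ hx)) hint
    _ = _ := by simp [hend, arctanh_zero, arctanh_neg, neg_div]
end

section
/- The function σ(t) = arctanh(√(1 - e^{-t}))/√(1 - e^{-t}) satisfies |σ(t) - (t/2 + ln 2)| → 0 as t → ∞. -/
open Filter Real

open Topology

/-! With `s = √(1 - e^{-t})` we have `1 - s² = e^{-t}`, so `arctanh s = log (1 + s) + t / 2` and
`σ(t) - (t/2 + log 2) = (log (1 + s) / s - log 2) + t (s⁻¹ - 1) / 2`.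
As `t → ∞`, `s → 1` makes the first term vanish, and `t (s⁻¹ - 1) = t e^{-t} / (s (1 + s)) → 0`. -/

lemma arctanh_eq_log_one_add_sub_log_one_sub_sq_div_two {x : ℝ} (hx : |x| < 1) :
    arctanh x = log (1 + x) - log (1 - x ^ 2) / 2 := by
  obtain ⟨hx₁, hx₂⟩ := abs_lt.mp hx
  have hquot : (1 + x) / (1 - x) = (1 + x) ^ 2 / (1 - x ^ 2) := by
    field_simp [show 1 - x ≠ 0 by linarith, show 1 - x ^ 2 ≠ 0 by nlinarith]
    ring
  rw [arctanh, hquot, log_div (by nlinarith) (by nlinarith), log_pow]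
  ring

lemma one_sub_sqrt_one_sub_exp_neg_sq {t : ℝ} (ht : 0 ≤ t) :
    1 - √(1 - exp (-t)) ^ 2 = exp (-t) := by
  rw [sq_sqrt (by simpa using ht)]
  ring

lemma sqrt_one_sub_exp_neg_lt_one (t : ℝ) : √(1 - exp (-t)) < 1 :=
  (sqrt_lt' one_pos).mpr (by linarith [exp_pos (-t)])

lemma arctanh_sqrt_one_sub_exp_neg {t : ℝ} (ht : 0 ≤ t) :
    arctanh √(1 - exp (-t)) = log (1 + √(1 - exp (-t))) + t / 2 := by
  rw [arctanh_eq_log_one_add_sub_log_one_sub_sq_div_two, one_sub_sqrt_one_sub_exp_neg_sq ht,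
    log_exp]
  · ring
  · rw [abs_of_nonneg (sqrt_nonneg _)]
    exact sqrt_one_sub_exp_neg_lt_one t

lemma tendsto_sqrt_one_sub_exp_neg_atTop :
    Tendsto (fun t => √(1 - exp (-t))) atTop (𝓝 1) := by
  have h : Tendsto (fun t => 1 - exp (-t)) atTop (𝓝 1) := by
    simpa using tendsto_exp_neg_atTop_nhds_zero.const_sub (1 : ℝ)
  simpa using h.sqrt

lemma tendsto_mul_inv_sqrt_one_sub_exp_neg_sub_one_atTop :
    Tendsto (fun t => t * ((√(1 - exp (-t)))⁻¹ - 1)) atTop (𝓝 0) := by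
  set s := fun t => √(1 - exp (-t))
  have hs : Tendsto s atTop (𝓝 1) := tendsto_sqrt_one_sub_exp_neg_atTop
  have hlim : Tendsto (fun t => t * exp (-t) / (s t * (1 + s t))) atTop (𝓝 0) := by
    have hnum : Tendsto (fun t => t * exp (-t)) atTop (𝓝 0) := by
      simpa using tendsto_pow_mul_exp_neg_atTop_nhds_zero 1
    rw [← zero_div (1 * (1 + 1) : ℝ)]
    exact hnum.div (hs.mul (hs.const_add 1)) (by norm_num)
  refine hlim.congr' ?_
  filter_upwards [eventually_gt_atTop 0] with t ht
  have hs_pos : 0 < s t := sqrt_pos.mpr (by simpa using ht)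
  have hs_sq : 1 - s t ^ 2 = exp (-t) := one_sub_sqrt_one_sub_exp_neg_sq ht.le
  change _ = t * ((s t)⁻¹ - 1)
  clear_value s
  rw [← hs_sq]
  field_simp
  ring

lemma tendsto_log_one_add_div_self_nhds_one :
    Tendsto (fun x => log (1 + x) / x) (𝓝 1) (𝓝 (log 2)) := by
  have hcont : ContinuousAt (fun x => log (1 + x) / x) 1 :=
    ((continuous_const.add continuous_id).continuousAt.log (by norm_num)).div
      continuousAt_id one_ne_zero
  simpa [one_add_one_eq_two] using hcont.tendsto

/-- The spread of the unit interval,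
`σ(t) = arctanh(√(1-e^{-t}))/√(1-e^{-t})`, satisfies
`|σ(t) - (t/2 + ln 2)| → 0` as `t → ∞`. -/
theorem spread_unit_interval_asymptotic :
    Tendsto (fun t : ℝ =>
        |arctanh (Real.sqrt (1 - Real.exp (-t))) / Real.sqrt (1 - Real.exp (-t))
          - (t / 2 + Real.log 2)|) atTop (nhds 0) := by
  set s := fun t => √(1 - exp (-t))
  have hsplit : ∀ᶠ t in atTop, (log (1 + s t) / s t - log 2) + t * ((s t)⁻¹ - 1) / 2
      = arctanh (s t) / s t - (t / 2 + log 2) := by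
    filter_upwards [eventually_ge_atTop 0] with t ht
    rw [arctanh_sqrt_one_sub_exp_neg ht]
    ring
  have hlim : Tendsto (fun t => (log (1 + s t) / s t - log 2) + t * ((s t)⁻¹ - 1) / 2)
      atTop (𝓝 0) := by
    simpa using ((tendsto_log_one_add_div_self_nhds_one.comp
      tendsto_sqrt_one_sub_exp_neg_atTop).sub_const (log 2)).add
      (tendsto_mul_inv_sqrt_one_sub_exp_neg_sub_one_atTop.div_const 2)
  simpa using (hlim.congr' hsplit).abs
end
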